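/- arXiv:1111.2895 — 2 statements merged into one kernel-verified Lean document; each statement's English description precedes it below -/
import Mathlib

section
/- For every q ≥ 1 and n ≥ 5, the diameter of the graph AΓ_n^q equals 2. -/
/-- The set of even derangements: fixed-point-free elements of the alternating group. -/
def evenDerangements (n : ℕ) : Set (alternatingGroup (Fin n)) :=
  {σ | ∀ i : Fin n, (σ : Equiv.Perm (Fin n)) i ≠ i}

lemma evenDerangements_inv {n : ℕ} {g : alternatingGroup (Fin n)}
    (hg : g ∈ evenDerangements n) : g⁻¹ ∈ evenDerangements n := by
  intro i hi
  apply hg i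
  have h1 : ((g : Equiv.Perm (Fin n)))⁻¹ i = i := by
    simpa using hi
  conv_lhs => rw [← h1]
  simp

/-- The tensor power `AΓ_n^q` of the even derangement graph. -/
def AGamma (n q : ℕ) : SimpleGraph (Fin q → alternatingGroup (Fin n)) where
  Adj σ τ := σ ≠ τ ∧ ∀ k, σ k * (τ k)⁻¹ ∈ evenDerangements n
  symm := ⟨by
    rintro σ τ ⟨hne, h⟩
    refine ⟨hne.symm, fun k => ?_⟩
    have := evenDerangements_inv (h k)
    simpa [mul_inv_rev] using this⟩
  loopless := ⟨fun σ h => h.1 rfl⟩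

/-- The even derangement graph `AΓ_n`. -/
def AGammaOne (n : ℕ) : SimpleGraph (alternatingGroup (Fin n)) where
  Adj σ τ := σ ≠ τ ∧ σ * τ⁻¹ ∈ evenDerangements n
  symm := ⟨by
    rintro σ τ ⟨hne, h⟩
    refine ⟨hne.symm, ?_⟩
    have := evenDerangements_inv h
    simpa [mul_inv_rev] using this⟩
  loopless := ⟨fun σ h => h.1 rfl⟩

/-- The maximum independent set candidates `B_{i,j}^{(k)}`. -/
def B (n q : ℕ) (i j : Fin n) (k : Fin q) : Set (Fin q → alternatingGroup (Fin n)) :=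
  {σ | (σ k : Equiv.Perm (Fin n)) i = j}

/-- A set of vertices is independent if no two of its members are adjacent. -/
def IsIndep {V : Type*} (G : SimpleGraph V) (s : Set V) : Prop :=
  s.Pairwise fun u v => ¬ G.Adj u v

/-!
Any two vertices have a common neighbour, found coordinatewise: for `α, β ∈ A_n` it suffices to
find an even derangement `d` with `d x ≠ (α β⁻¹) x` for all `x`, since then `d⁻¹ α` is adjacent
to both. Such a `d` of either sign exists for `n ≥ 5`, by induction on `n`: given a solution `d'`
of the opposite sign on the last `n` points, the point `0` is inserted into a cycle of `d'` after
a suitably chosen point `a`, which flips the sign; the base case `n = 5` is a finite check.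
Conversely, the constant tuple of a `3`-cycle fixing a point is not adjacent to the identity.
-/

open Equiv Equiv.Perm

lemma SimpleGraph.diam_eq_two_of_nonempty_commonNeighbors {V : Type*} {G : SimpleGraph V}
    (hcommon : ∀ u v, u ≠ v → ¬G.Adj u v → (G.commonNeighbors u v).Nonempty)
    (hfar : ∃ u v, u ≠ v ∧ ¬G.Adj u v) : G.diam = 2 := by
  have hle : ∀ u v, G.edist u v ≤ 2 := fun u v => by
    by_cases huv : u = v
    · simp [huv]
    by_cases hadj : G.Adj u v
    · simp [edist_eq_one_iff_adj.2 hadj]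
    · exact (edist_eq_two_iff.2 ⟨huv, hadj, hcommon u v huv hadj⟩).le
  obtain ⟨u, v, huv, hadj⟩ := hfar
  have hediam : G.ediam = 2 := le_antisymm (ediam_le_of_edist_le hle)
    ((edist_eq_two_iff.2 ⟨huv, hadj, hcommon u v huv hadj⟩).ge.trans edist_le_ediam)
  simp [diam, hediam]

lemma Fintype.exists_apply_ne_and_apply_ne {α β : Type*} [Fintype α]
    (hα : 2 < Fintype.card α) {f g : α → β} (hf : Function.Injective f)
    (hg : Function.Injective g) (b c : β) : ∃ a, f a ≠ b ∧ g a ≠ c := by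
  classical
  by_contra! H
  have hcover : Finset.univ ⊆ Finset.univ.filter (f · = b) ∪ Finset.univ.filter (g · = c) :=
    fun a _ => by by_cases hfa : f a = b <;> simp [hfa, H a]
  have hb : (Finset.univ.filter (f · = b)).card ≤ 1 :=
    Finset.card_le_one.2 fun x hx y hy => hf (by simp_all)
  have hc : (Finset.univ.filter (g · = c)).card ≤ 1 :=
    Finset.card_le_one.2 fun x hx y hy => hg (by simp_all)
  have := (Finset.card_le_card hcover).trans (Finset.card_union_le _ _)
  rw [Finset.card_univ] at this
  omega

def HasAvoidingDerangementsOfEachSign (m : ℕ) : Prop :=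
  ∀ (g : Perm (Fin m)) (s : ℤˣ), ∃ d : Perm (Fin m), sign d = s ∧ ∀ x, d x ≠ x ∧ d x ≠ g x

set_option maxRecDepth 40000 in
lemma hasAvoidingDerangementsOfEachSign_five : HasAvoidingDerangementsOfEachSign 5 := by
  unfold HasAvoidingDerangementsOfEachSign
  decide

lemma HasAvoidingDerangementsOfEachSign.succ {n : ℕ} (hn : 2 < n)
    (ih : HasAvoidingDerangementsOfEachSign n) : HasAvoidingDerangementsOfEachSign (n + 1) := by
  intro g s
  obtain ⟨⟨p, e⟩, rfl⟩ := decomposeFin.symm.surjective g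
  obtain ⟨d', hd'_sign, hd'⟩ := ih e (-s)
  obtain ⟨a, hd'a, hea⟩ := Fintype.exists_apply_ne_and_apply_ne (by simpa using hn)
    ((Fin.succ_injective _).comp d'.injective) ((Fin.succ_injective _).comp e.injective) p p
  simp only [Function.comp_apply] at hd'a hea
  refine ⟨decomposeFin.symm ((d' a).succ, d'), by simp [hd'_sign], fun x => ?_⟩
  refine Fin.cases ⟨by simp, by simpa using hd'a⟩ (fun i => ?_) x
  simp only [decomposeFin_symm_apply_succ]
  rcases eq_or_ne i a with rfl | hia
  · rw [swap_apply_right]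
    refine ⟨(Fin.succ_ne_zero i).symm, fun h => hea ?_⟩
    rwa [eq_comm, swap_apply_eq_iff, swap_apply_left] at h
  rw [swap_apply_of_ne_of_ne (Fin.succ_ne_zero _)
    fun h => hia (d'.injective (Fin.succ_injective _ h))]
  refine ⟨Fin.succ_inj.not.2 (hd' i).1, ?_⟩
  rcases eq_or_ne (e i).succ p with hep | hep
  · simp [hep, Fin.succ_ne_zero]
  · rw [swap_apply_of_ne_of_ne (Fin.succ_ne_zero _) hep]
    exact Fin.succ_inj.not.2 (hd' i).2

lemma hasAvoidingDerangementsOfEachSign {m : ℕ} (hm : 5 ≤ m) :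
    HasAvoidingDerangementsOfEachSign m := by
  induction m, hm using Nat.le_induction with
  | base => exact hasAvoidingDerangementsOfEachSign_five
  | succ n hn ih => exact ih.succ (by omega)

lemma one_notMem_evenDerangements {n : ℕ} (hn : n ≠ 0) : 1 ∉ evenDerangements n :=
  fun h => h ⟨0, Nat.pos_of_ne_zero hn⟩ rfl

lemma exists_mul_inv_mem_evenDerangements {n : ℕ} (hn : 5 ≤ n)
    (α β : alternatingGroup (Fin n)) :
    ∃ ρ, α * ρ⁻¹ ∈ evenDerangements n ∧ β * ρ⁻¹ ∈ evenDerangements n := by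
  obtain ⟨d, hd_sign, hd⟩ :=
    hasAvoidingDerangementsOfEachSign hn (α * β⁻¹ : alternatingGroup (Fin n)) 1
  let D : alternatingGroup (Fin n) := ⟨d, mem_alternatingGroup.2 hd_sign⟩
  refine ⟨D⁻¹ * α, fun x => by simpa [D] using (hd x).1, fun x hx => (hd x).2 ?_⟩
  conv_rhs => rw [← hx]
  simp [D, Perm.mul_apply]

lemma AGamma_adj_iff {n q : ℕ} (hn : n ≠ 0) (hq : q ≠ 0)
    {σ τ : Fin q → alternatingGroup (Fin n)} :
    (AGamma n q).Adj σ τ ↔ ∀ k, σ k * (τ k)⁻¹ ∈ evenDerangements n := by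
  refine ⟨And.right, fun h => ⟨fun hστ => ?_, h⟩⟩
  exact one_notMem_evenDerangements hn (by simpa [hστ] using h ⟨0, Nat.pos_of_ne_zero hq⟩)

lemma exists_ne_one_notMem_evenDerangements {n : ℕ} (hn : 4 ≤ n) :
    ∃ c : alternatingGroup (Fin n), c ≠ 1 ∧ c ∉ evenDerangements n := by
  have h3 : IsThreeCycle
      (swap (⟨0, by omega⟩ : Fin n) ⟨1, by omega⟩ * swap ⟨0, by omega⟩ ⟨2, by omega⟩) :=
    isThreeCycle_swap_mul_swap_same (by simp) (by simp) (by simp)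
  refine ⟨⟨_, h3.mem_alternatingGroup⟩, fun h => h3.ne_one (congrArg Subtype.val h), fun h => ?_⟩
  exact h ⟨3, by omega⟩ (by simp [swap_apply_of_ne_of_ne])

/-- the diameter of `AΓ_n^q` is 2 for `q ≥ 1`, `n ≥ 5`. -/
theorem AGamma_pow_diam (n q : ℕ) (hq : 1 ≤ q) (hn : 5 ≤ n) :
    (AGamma n q).diam = 2 := by
  have hadj := @AGamma_adj_iff n q (by omega) (by omega)
  refine SimpleGraph.diam_eq_two_of_nonempty_commonNeighbors (fun u v _ _ => ?_) ?_
  · choose w hu hv using fun k => exists_mul_inv_mem_evenDerangements hn (u k) (v k)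
    exact ⟨w, hadj.2 hu, hadj.2 hv⟩
  · obtain ⟨c, hc_ne, hc⟩ := exists_ne_one_notMem_evenDerangements (by omega : 4 ≤ n)
    refine ⟨fun _ => c, 1, fun h => hc_ne (congrFun h ⟨0, hq⟩), fun h => hc ?_⟩
    simpa using hadj.1 h ⟨0, hq⟩
end

section
/- For every q ≥ 1 and n ≥ 5, the chromatic number of AΓ_n^q equals n. -/
/-!
Colouring a tuple `σ` by the value `σ k i` at one fixed coordinate `k` and point `i` is proper,
since adjacent tuples disagree everywhere; so `n` colours suffice. Conversely, `n` pairwise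
discordant even permutations `g a` give, as constant tuples, an `n`-clique. For odd `n` the
rotations `x ↦ x + a` of `Fin n` are even. For even `n` the rotation by `a` has sign `(-1) ^ a`,
so for odd `a` we first apply the transposition `(0 2)`; it preserves parity, which is additive
on `Fin n`, so `g a x = g b x` still forces `a = b`.
-/

open Equiv Equiv.Perm SimpleGraph

section
open Fin.NatCast

lemma finRotate_pow_eq_addRight {n : ℕ} [NeZero n] (k : ℕ) :
    finRotate n ^ k = Equiv.addRight (k : Fin n) := by
  induction k with
  | zero => ext; simp
  | succ k ih => ext x; simp [pow_succ', ih, add_assoc]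

lemma Fin.sign_addRight {n : ℕ} [NeZero n] (a : Fin n) :
    sign (Equiv.addRight a) = ((-1) ^ (n - 1)) ^ (a : ℕ) := by
  conv_lhs => rw [← Fin.cast_val_eq_self a]
  rw [← finRotate_pow_eq_addRight, map_pow, sign_finRotate]

end

def Fin.valModTwo {n : ℕ} [NeZero n] (h : 2 ∣ n) : Fin n →+ ZMod 2 :=
  AddMonoidHom.mk' (fun x => (x : ℕ)) fun x y => by
    rw [Fin.val_add, ← Nat.cast_add, ZMod.natCast_eq_natCast_iff', Nat.mod_mod_of_dvd _ h]

@[simp]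
lemma Fin.valModTwo_apply {n : ℕ} [NeZero n] (h : 2 ∣ n) (x : Fin n) :
    Fin.valModTwo h x = (x : ℕ) := rfl

lemma pairwise_forall_apply_add_ne {G H : Type*} [AddGroup G] [AddGroup H] (φ : G →+ H)
    {c : G → Perm G} (hc : ∀ a x, φ (c a x) = φ x) (hcφ : ∀ a b, φ a = φ b → c a = c b) :
    Pairwise fun a b => ∀ x, c a x + a ≠ c b x + b := by
  intro a b hab x h
  have hφ : φ a = φ b := by simpa [hc] using congrArg φ h
  rw [hcφ a b hφ] at h
  exact hab (add_left_cancel h)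

lemma exists_pairwise_apply_ne_alternatingGroup_of_odd {n : ℕ} (hn : Odd n) :
    ∃ g : Fin n → alternatingGroup (Fin n),
      Pairwise fun a b => ∀ x, (g a : Perm (Fin n)) x ≠ (g b : Perm (Fin n)) x := by
  have : NeZero n := ⟨hn.pos.ne'⟩
  refine ⟨fun a => ⟨Equiv.addRight a, ?_⟩, fun a b hab x => ?_⟩
  · rw [mem_alternatingGroup, Fin.sign_addRight, (Nat.Odd.sub_odd hn odd_one).neg_one_pow, one_pow]
  · simpa using hab

lemma exists_pairwise_apply_ne_alternatingGroup_of_even {n : ℕ} (hn : Even n) (h2 : 2 < n) :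
    ∃ g : Fin n → alternatingGroup (Fin n),
      Pairwise fun a b => ∀ x, (g a : Perm (Fin n)) x ≠ (g b : Perm (Fin n)) x := by
  have : NeZero n := ⟨by omega⟩
  set φ := Fin.valModTwo (even_iff_two_dvd.1 hn)
  set τ : Perm (Fin n) := swap 0 ⟨2, h2⟩
  have hτ : ∀ x, φ (τ x) = φ x := by
    have h02 : φ 0 = φ ⟨2, h2⟩ := by
      simp only [φ, Fin.valModTwo_apply, Fin.val_zero, Nat.cast_zero]
      rfl
    intro x
    rcases eq_or_ne x 0 with rfl | hx0
    · simp [τ, h02]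
    rcases eq_or_ne x ⟨2, h2⟩ with rfl | hx2
    · simp [τ, h02]
    · simp [τ, swap_apply_of_ne_of_ne hx0 hx2]
  set c : Fin n → Perm (Fin n) := fun a => if φ a = 0 then 1 else τ
  have sign_c : ∀ a, sign (c a) = (-1) ^ (a : ℕ) := by
    intro a
    rcases Nat.even_or_odd a with ha | ha
    · have : φ a = 0 := ZMod.natCast_eq_zero_iff_even.2 ha
      simp [c, this, ha.neg_one_pow]
    · have : φ a ≠ 0 := by
        rwa [Ne, Fin.valModTwo_apply, ZMod.natCast_eq_zero_iff_even, Nat.not_even_iff_odd]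
      simp [c, this, ha.neg_one_pow, τ]
  refine ⟨fun a => ⟨Equiv.addRight a * c a, ?_⟩, fun a b hab x => ?_⟩
  · rw [mem_alternatingGroup, map_mul, Fin.sign_addRight, sign_c,
      (Nat.Even.sub_odd (by omega) hn odd_one).neg_one_pow, ← mul_pow, neg_mul_neg, mul_one, one_pow]
  · exact pairwise_forall_apply_add_ne φ (c := c) (fun a x => by dsimp only [c]; split <;> simp [hτ])
      (fun a b h => by simp only [c, h]) hab x

lemma exists_pairwise_apply_ne_alternatingGroup {n : ℕ} (hn : 3 ≤ n) :
    ∃ g : Fin n → alternatingGroup (Fin n),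
      Pairwise fun a b => ∀ x, (g a : Perm (Fin n)) x ≠ (g b : Perm (Fin n)) x :=
  (Nat.even_or_odd n).elim (exists_pairwise_apply_ne_alternatingGroup_of_even · (by omega))
    exists_pairwise_apply_ne_alternatingGroup_of_odd

lemma mul_inv_mem_evenDerangements_iff {n : ℕ} {g h : alternatingGroup (Fin n)} :
    g * h⁻¹ ∈ evenDerangements n ↔ ∀ i, (g : Perm (Fin n)) i ≠ (h : Perm (Fin n)) i := by
  simp only [evenDerangements, Set.mem_ofPred_eq, Subgroup.coe_mul, InvMemClass.coe_inv, mul_apply]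
  rw [(h : Perm (Fin n)).surjective.forall]
  simp

lemma AGamma_adj {n q : ℕ} {σ τ : Fin q → alternatingGroup (Fin n)} :
    (AGamma n q).Adj σ τ ↔
      σ ≠ τ ∧ ∀ k i, (σ k : Perm (Fin n)) i ≠ (τ k : Perm (Fin n)) i := by
  simp only [AGamma, mul_inv_mem_evenDerangements_iff]

lemma AGamma_colorable {n q : ℕ} (k : Fin q) (i : Fin n) : (AGamma n q).Colorable n :=
  ⟨Coloring.mk (fun σ => (σ k : Perm (Fin n)) i) fun h => (AGamma_adj.1 h).2 k i⟩

lemma le_chromaticNumber_AGamma {n q : ℕ} (hq : 0 < q) {g : Fin n → alternatingGroup (Fin n)}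
    (hg : Pairwise fun a b => ∀ x, (g a : Perm (Fin n)) x ≠ (g b : Perm (Fin n)) x) :
    (n : ℕ∞) ≤ (AGamma n q).chromaticNumber :=
  le_chromaticNumber_of_pairwise_adj (by simp) (fun a _ => g a) fun a b hab =>
    AGamma_adj.2 ⟨fun h => hg hab a (by rw [congrFun h ⟨0, hq⟩]), fun _ => hg hab⟩

/-- the chromatic number of `AΓ_n^q` equals `n` for `q ≥ 1`, `n ≥ 5`. -/
theorem AGamma_pow_chromaticNumber (n q : ℕ) (hq : 1 ≤ q) (hn : 5 ≤ n) :
    (AGamma n q).chromaticNumber = (n : ℕ∞) := by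
  obtain ⟨g, hg⟩ := exists_pairwise_apply_ne_alternatingGroup (by omega : 3 ≤ n)
  exact le_antisymm (AGamma_colorable ⟨0, hq⟩ ⟨0, by omega⟩).chromaticNumber_le
    (le_chromaticNumber_AGamma hq hg)
end
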